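/- Behavior of Φ^Ξ under change of flattening: let Ξ = (A,B,ν,z,f,f'') be a nondegenerate formal Neumann–Zagier datum of size N over a field K of characteristic zero, and let (f̃, f̃'') ∈ Z^N × Z^N be another flattening, i.e. A·f̃ + B·f̃'' = ν. Then the constant c := (f̃ᵗ·B^{−1}A·f̃ − fᵗ·B^{−1}A·f)/8 lies in (1/8)·Z, and Φ^{Ξ̃}(ħ) = exp(c·ħ)·Φ^{Ξ}(ħ), where Ξ̃ := (A,B,ν,z,f̃,f̃''). -/

import Mathlib

open scoped BigOperators
open Matrix

noncomputable section Defs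

/-- Formal exponential of a power series (agreeing with the genuine exponential
whenever the constant term of `g` vanishes). -/
def expPS {A : Type*} [CommRing A] [Algebra ℚ A] (g : PowerSeries A) : PowerSeries A :=
  PowerSeries.mk fun n => ∑ m ∈ Finset.range (n + 1),
    ((m.factorial : ℚ)⁻¹) • PowerSeries.coeff (R := A) n (g ^ m)

/-- Substitution along a ring homomorphism `S : A →+* A⟦t⟧`, applied
coefficientwise to a power series in `t` and re-expanded in `t`. -/
def substAlong {A : Type*} [CommRing A] (S : A →+* PowerSeries A) (f : PowerSeries A) :
    PowerSeries A :=
  PowerSeries.mk fun n => ∑ m ∈ Finset.range (n + 1),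
    PowerSeries.coeff (R := A) (n - m) (S (PowerSeries.coeff (R := A) m f))

/-- The second order differential operator `Σ_{i,j} L i j ∂_i ∂_j` on polynomials. -/
def gaussD {R : Type*} [CommRing R] {ι : Type*} [Fintype ι] (L : Matrix ι ι R)
    (p : MvPolynomial ι R) : MvPolynomial ι R :=
  ∑ i, ∑ j, L i j • MvPolynomial.pderiv i (MvPolynomial.pderiv j p)

/-- `exp((1/2) Σ_{i,j} L_{ij} ∂_i ∂_j) p |_{x = 0}`; the exponential series
terminates on polynomials since the operator lowers total degree by two. -/
def gaussBV {R : Type*} [CommRing R] [Algebra ℚ R] {ι : Type*} [Fintype ι]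
    (L : Matrix ι ι R) (p : MvPolynomial ι R) : R :=
  MvPolynomial.constantCoeff
    (∑ m ∈ Finset.range (p.totalDegree + 1),
      ((1 : ℚ) / ((2 : ℚ) ^ m * m.factorial)) • (gaussD L)^[m] p)

/-- Formal Gaussian integration `⟨f⟩_{x,Λ}` of a formal power series with
polynomial coefficients, with respect to the invertible symmetric matrix `Λ`. -/
def fgi {R : Type*} [CommRing R] [Algebra ℚ R] {ι : Type*} [Fintype ι] [DecidableEq ι]
    (Λ : Matrix ι ι R) (f : PowerSeries (MvPolynomial ι R)) : PowerSeries R :=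
  PowerSeries.mk fun n => gaussBV Λ⁻¹ (PowerSeries.coeff n f)

/-- Polynomial numerators of the negative polylogarithms:
`Li_{-n}(z) = LiPoly n (z) / (1-z)^(n+1)`. -/
def LiPoly : ℕ → Polynomial ℚ
  | 0 => Polynomial.X
  | n + 1 => Polynomial.X *
      (Polynomial.derivative (LiPoly n) * (1 - Polynomial.X) + ((n : ℚ) + 1) • LiPoly n)

/-- The rational function `Li_{-n}(z)`, defined recursively by
`Li_0(z) = z/(1-z)` and `Li_{-n-1}(z) = z · (d/dz) Li_{-n}(z)`. -/
def negLi {K : Type*} [Field K] [CharZero K] (n : ℕ) (z : K) : K :=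
  Polynomial.aeval z (LiPoly n) / (1 - z) ^ (n + 1)

/-- The formal power series `ψ_ħ(ξ, z)` in `t = ħ^{1/2}`:
`exp(−Σ_{k,ℓ ≥ 0, k+ℓ/2 > 1} (B_k ξ^ℓ ħ^{k+ℓ/2−1}/(ℓ! k!)) Li_{2−k−ℓ}(z))`. -/
def psi {K : Type*} [Field K] [CharZero K] {A : Type*} [CommRing A] [Algebra ℚ A]
    [Algebra K A] (ξ : A) (z : K) : PowerSeries A :=
  expPS (PowerSeries.mk fun n =>
    if n = 0 then 0 else
      - ∑ k ∈ Finset.range ((n + 2) / 2 + 1),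
          algebraMap K A
              ((bernoulli k / ((k.factorial : ℚ) * ((n + 2 - 2 * k).factorial : ℚ))) •
                negLi (n - k) z) *
            ξ ^ (n + 2 - 2 * k))

end Defs

noncomputable section NZDef

/-- The data of a formal Neumann–Zagier datum `Ξ = (A, B, ν, z, f, f'')`. -/
structure NZ (K ι : Type*) where
  A : Matrix ι ι ℤ
  B : Matrix ι ι ℤ
  ν : ι → ℤ
  z : ι → K
  f : ι → ℤ
  f'' : ι → ℤ

namespace NZ

variable {K : Type*} [Field K] [CharZero K] {ι : Type*} [Fintype ι] [DecidableEq ι]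

/-- `A` as a matrix over `K`. -/
def AK (Ξ : NZ K ι) : Matrix ι ι K := Ξ.A.map fun n => (n : K)

/-- `B` as a matrix over `K`. -/
def BK (Ξ : NZ K ι) : Matrix ι ι K := Ξ.B.map fun n => (n : K)

/-- The quadratic form `Λ = −B⁻¹A + diag(1/(1−z_j))`. -/
def Lam (Ξ : NZ K ι) : Matrix ι ι K :=
  -(Ξ.BK⁻¹ * Ξ.AK) + Matrix.diagonal fun j => (1 - Ξ.z j)⁻¹

/-- Nondegeneracy of a formal Neumann–Zagier datum: `A Bᵗ` is symmetric,
`det B ≠ 0`, `(f, f'')` is a flattening, the shapes avoid `0` and `1`, and the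
quadratic form `Λ` is invertible. -/
def IsNondeg (Ξ : NZ K ι) : Prop :=
  (Ξ.A * Ξ.Bᵀ)ᵀ = Ξ.A * Ξ.Bᵀ ∧ Ξ.B.det ≠ 0 ∧
    Ξ.A.mulVec Ξ.f + Ξ.B.mulVec Ξ.f'' = Ξ.ν ∧
    (∀ j, Ξ.z j ≠ 0) ∧ (∀ j, Ξ.z j ≠ 1) ∧ IsUnit Ξ.Lam.det

/-- The vector `B⁻¹ ν` over `K`. -/
def w (Ξ : NZ K ι) : ι → K := Ξ.BK⁻¹.mulVec fun i => (Ξ.ν i : K)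

/-- The linear part `(1/2) xᵗ 1 − (1/2) xᵗ B⁻¹ ν` of the exponential prefactor. -/
def linPart (Ξ : NZ K ι) : MvPolynomial ι K :=
  ∑ i, MvPolynomial.C ((1 - Ξ.w i) / 2) * MvPolynomial.X i

/-- The constant `(1/8) fᵗ B⁻¹ A f`. -/
def quadConst (Ξ : NZ K ι) : K :=
  dotProduct (fun i => (Ξ.f i : K)) ((Ξ.BK⁻¹ * Ξ.AK).mulVec fun i => (Ξ.f i : K)) / 8

/-- The integrand
`f^Ξ_ħ(x,z) = exp((ħ^{1/2}/2) xᵗ1 − (ħ^{1/2}/2) xᵗB⁻¹ν + (ħ/8) fᵗB⁻¹Af) ∏_i ψ_ħ(x_i, z_i)`. -/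
def integrand (Ξ : NZ K ι) : PowerSeries (MvPolynomial ι K) :=
  expPS (PowerSeries.monomial (R := MvPolynomial ι K) 1 Ξ.linPart +
      PowerSeries.monomial (R := MvPolynomial ι K) 2 (MvPolynomial.C Ξ.quadConst)) *
    ∏ i, psi (MvPolynomial.X i) (Ξ.z i)

/-- The formal power series `Φ^Ξ(ħ) = ⟨f^Ξ_ħ(x,z)⟩_{x,Λ}`. -/
def Phi (Ξ : NZ K ι) : PowerSeries K := fgi Ξ.Lam Ξ.integrand

end NZ

end NZDef

set_option linter.unusedSectionVars false
section Helpers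
open MvPolynomial
variable {R : Type*} [CommRing R] [Algebra ℚ R] {ι : Type*} [Fintype ι]

lemma totalDegree_pderiv_le {σ : Type*} (i : σ) (p : MvPolynomial σ R) {d : ℕ}
    (h : p.totalDegree ≤ d + 1) : (pderiv i p).totalDegree ≤ d := by
  classical
  rw [p.as_sum, map_sum]
  refine (totalDegree_finset_sum _ _).trans ?_
  rw [Finset.sup_le_iff]
  intro s hs
  rw [pderiv_monomial]
  by_cases hsi : s i = 0
  · simp [hsi]
  · refine le_trans (totalDegree_monomial_le _ _) ?_
    show (s - Finsupp.single i 1).sum (fun _ e => e) ≤ d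
    have hle : Finsupp.single i 1 ≤ s := by
      rwa [Finsupp.single_le_iff, Nat.one_le_iff_ne_zero]
    have hsum : (s - Finsupp.single i 1).sum (fun _ e => e) + 1 = s.sum (fun _ e => e) := by
      have := tsub_add_cancel_of_le hle
      calc (s - Finsupp.single i 1).sum (fun _ e => e) + 1
          = (s - Finsupp.single i 1).sum (fun _ e => e)
            + (Finsupp.single i 1).sum (fun _ e => e) := by
            rw [Finsupp.sum_single_index]; rfl
        _ = ((s - Finsupp.single i 1) + Finsupp.single i 1).sum (fun _ e => e) := by
            rw [Finsupp.sum_add_index' (fun _ => rfl) (fun _ _ _ => rfl)]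
        _ = s.sum (fun _ e => e) := by rw [this]
    have hs' : s.sum (fun _ e => e) ≤ d + 1 := (le_totalDegree hs).trans h
    omega

lemma totalDegree_gaussD_le (L : Matrix ι ι R) (p : MvPolynomial ι R) {d : ℕ}
    (h : p.totalDegree ≤ d + 2) : (gaussD L p).totalDegree ≤ d := by
  refine (totalDegree_finset_sum _ _).trans ?_
  rw [Finset.sup_le_iff]; intro i _
  refine (totalDegree_finset_sum _ _).trans ?_
  rw [Finset.sup_le_iff]; intro j _
  refine (totalDegree_smul_le _ _).trans ?_
  exact totalDegree_pderiv_le _ _ (totalDegree_pderiv_le _ _ h)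

lemma gaussD_add (L : Matrix ι ι R) (p q : MvPolynomial ι R) :
    gaussD L (p + q) = gaussD L p + gaussD L q := by
  simp [gaussD, smul_add, Finset.sum_add_distrib]

lemma gaussD_zero (L : Matrix ι ι R) : gaussD L (0 : MvPolynomial ι R) = 0 := by
  simp [gaussD]

lemma gaussD_iterate_zero (L : Matrix ι ι R) (m : ℕ) :
    (gaussD L)^[m] (0 : MvPolynomial ι R) = 0 := by
  induction m with
  | zero => rfl
  | succ m ih => rw [Function.iterate_succ_apply, gaussD_zero, ih]

lemma gaussD_iterate_eq_zero (L : Matrix ι ι R) {p : MvPolynomial ι R} {m : ℕ}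
    (h : p.totalDegree < m) : (gaussD L)^[m] p = 0 := by
  induction m generalizing p with
  | zero => omega
  | succ m ih =>
    rw [Function.iterate_succ_apply]
    by_cases h0 : p.totalDegree = 0
    · have hp : ∀ j : ι, pderiv j p = 0 := by
        intro j
        classical
        rw [p.as_sum, map_sum]
        refine Finset.sum_eq_zero fun s hs => ?_
        rw [pderiv_monomial, (totalDegree_eq_zero_iff ι p).mp h0 s hs j]
        simp
      have : gaussD L p = 0 := by simp [gaussD, hp]
      rw [this, gaussD_iterate_zero]
    · have hm : 1 ≤ m := by omega
      refine ih ?_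
      have : (gaussD L p).totalDegree ≤ m - 1 := by
        refine totalDegree_gaussD_le _ _ ?_
        omega
      omega

set_option linter.unusedSectionVars false

lemma gaussBV_eq_of_le (L : Matrix ι ι R) (p : MvPolynomial ι R) {d : ℕ}
    (h : p.totalDegree ≤ d) :
    gaussBV L p = MvPolynomial.constantCoeff
      (∑ m ∈ Finset.range (d + 1),
        ((1 : ℚ) / ((2 : ℚ) ^ m * m.factorial)) • (gaussD L)^[m] p) := by
  rw [gaussBV]
  congr 1
  refine Finset.sum_subset ?_ ?_
  · exact Finset.range_subset_range.mpr (by omega)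
  · intro m _ hm
    rw [Finset.mem_range, not_lt] at hm
    rw [gaussD_iterate_eq_zero L (by omega), smul_zero]

lemma gaussD_iterate_add (L : Matrix ι ι R) (p q : MvPolynomial ι R) (m : ℕ) :
    (gaussD L)^[m] (p + q) = (gaussD L)^[m] p + (gaussD L)^[m] q := by
  induction m generalizing p q with
  | zero => rfl
  | succ m ih => rw [Function.iterate_succ_apply, Function.iterate_succ_apply,
      Function.iterate_succ_apply, gaussD_add, ih]

lemma gaussD_C_mul (L : Matrix ι ι R) (a : R) (p : MvPolynomial ι R) :
    gaussD L (C a * p) = C a * gaussD L p := by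
  simp only [gaussD, pderiv_C_mul, Finset.mul_sum, mul_smul_comm]

lemma gaussD_iterate_C_mul (L : Matrix ι ι R) (a : R) (p : MvPolynomial ι R) (m : ℕ) :
    (gaussD L)^[m] (C a * p) = C a * (gaussD L)^[m] p := by
  induction m generalizing p with
  | zero => rfl
  | succ m ih => rw [Function.iterate_succ_apply, Function.iterate_succ_apply,
      gaussD_C_mul, ih]

lemma gaussBV_add (L : Matrix ι ι R) (p q : MvPolynomial ι R) :
    gaussBV L (p + q) = gaussBV L p + gaussBV L q := by
  set d := max p.totalDegree q.totalDegree with hd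
  rw [gaussBV_eq_of_le L p (le_max_left _ _), gaussBV_eq_of_le L q (le_max_right _ _),
    gaussBV_eq_of_le L (p + q) ((totalDegree_add p q).trans le_rfl),
    ← map_add, ← Finset.sum_add_distrib]
  congr 1
  refine Finset.sum_congr rfl fun m _ => ?_
  rw [gaussD_iterate_add, smul_add]

lemma gaussBV_C_mul (L : Matrix ι ι R) (a : R) (p : MvPolynomial ι R) :
    gaussBV L (C a * p) = a * gaussBV L p := by
  have hle : (C a * p).totalDegree ≤ p.totalDegree :=
    (totalDegree_mul _ _).trans (by simp [totalDegree_C])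
  rw [gaussBV_eq_of_le L (C a * p) hle, gaussBV]
  rw [map_sum, map_sum, Finset.mul_sum]
  refine Finset.sum_congr rfl fun m _ => ?_
  rw [gaussD_iterate_C_mul]
  simp only [constantCoeff_eq, coeff_smul, coeff_C_mul, smul_eq_mul, mul_smul_comm]

lemma gaussBV_sum (L : Matrix ι ι R) {α : Type*} (s : Finset α) (f : α → MvPolynomial ι R) :
    gaussBV L (∑ k ∈ s, f k) = ∑ k ∈ s, gaussBV L (f k) := by
  classical
  induction s using Finset.induction_on with
  | empty => simp [gaussBV, gaussD_iterate_zero]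
  | insert _ _ hk ih => rw [Finset.sum_insert hk, Finset.sum_insert hk, gaussBV_add, ih]

end Helpers

section PSHelpers
set_option linter.unusedSectionVars false
open PowerSeries
variable {A : Type*} [CommRing A] [Algebra ℚ A]

lemma coeff_pow_eq_zero {a : PowerSeries A} (h0 : constantCoeff (R := A) a = 0)
    {n m : ℕ} (h : n < m) : coeff (R := A) n (a ^ m) = 0 := by
  induction m generalizing n with
  | zero => omega
  | succ m ih =>
    rw [pow_succ, coeff_mul]
    refine Finset.sum_eq_zero fun p hp => ?_
    rw [Finset.HasAntidiagonal.mem_antidiagonal] at hp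
    by_cases hp1 : p.1 < m
    · rw [ih hp1, zero_mul]
    · have h2 : p.2 = 0 := by omega
      rw [h2, coeff_zero_eq_constantCoeff, h0, mul_zero]

lemma coeff_expPS_eq (a : PowerSeries A) (h0 : constantCoeff (R := A) a = 0) {n M : ℕ} (h : n < M) :
    coeff (R := A) n (expPS a) = coeff (R := A) n (∑ m ∈ Finset.range M, (m.factorial : ℚ)⁻¹ • a ^ m) := by
  rw [expPS, coeff_mk, map_sum]
  simp only [coeff_smul]
  refine Finset.sum_subset (Finset.range_subset_range.mpr (by omega)) fun m _ hm => ?_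
  rw [Finset.mem_range, not_lt] at hm
  rw [coeff_pow_eq_zero h0 (by omega), smul_zero]

lemma sum_reindex_le {M : Type*} [AddCommMonoid M] (n : ℕ) (G : ℕ → ℕ → M)
    (hG : ∀ p q, n < p + q → G p q = 0) :
    ∑ m ∈ Finset.range (n+1), ∑ k ∈ Finset.range (m+1), G k (m - k)
      = ∑ p ∈ Finset.range (n+1), ∑ q ∈ Finset.range (n+1), G p q := by
  classical
  rw [← Finset.sum_product']
  rw [Finset.sum_sigma']
  rw [← Finset.sum_filter_add_sum_filter_not (Finset.range (n+1) ×ˢ Finset.range (n+1))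
      (fun p => p.1 + p.2 ≤ n)]
  have h2 : ∑ p ∈ (Finset.range (n+1) ×ˢ Finset.range (n+1)).filter
      (fun p => ¬ p.1 + p.2 ≤ n), G p.1 p.2 = 0 := by
    refine Finset.sum_eq_zero fun p hp => ?_
    rw [Finset.mem_filter] at hp
    exact hG p.1 p.2 (by omega)
  rw [h2, add_zero]
  refine Finset.sum_nbij' (fun x => (x.2, x.1 - x.2)) (fun p => ⟨p.1 + p.2, p.1⟩) ?_ ?_ ?_ ?_ ?_
  · rintro ⟨m, k⟩ hx
    rw [Finset.mem_sigma, Finset.mem_range, Finset.mem_range] at hx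
    rw [Finset.mem_filter, Finset.mem_product, Finset.mem_range, Finset.mem_range]
    dsimp only at hx ⊢
    omega
  · rintro ⟨p, q⟩ hp
    rw [Finset.mem_filter, Finset.mem_product, Finset.mem_range, Finset.mem_range] at hp
    rw [Finset.mem_sigma, Finset.mem_range, Finset.mem_range]
    dsimp only at hp ⊢
    omega
  · rintro ⟨m, k⟩ hx
    rw [Finset.mem_sigma, Finset.mem_range, Finset.mem_range] at hx
    dsimp only at hx ⊢
    have : k + (m - k) = m := by omega
    exact Sigma.ext this (by simp)
  · rintro ⟨p, q⟩ hp
    dsimp only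
    have : p + q - p = q := by omega
    simp [this]
  · rintro ⟨m, k⟩ hx
    rfl

lemma expPS_add (a b : PowerSeries A) (ha : constantCoeff (R := A) a = 0)
    (hb : constantCoeff (R := A) b = 0) : expPS (a + b) = expPS a * expPS b := by
  have hab : constantCoeff (R := A) (a + b) = 0 := by rw [map_add, ha, hb, add_zero]
  ext n
  have key : (∑ p ∈ Finset.range (n+1), (p.factorial:ℚ)⁻¹ • a^p) *
      (∑ q ∈ Finset.range (n+1), (q.factorial:ℚ)⁻¹ • b^q)
      = ∑ p ∈ Finset.range (n+1), ∑ q ∈ Finset.range (n+1),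
          ((p.factorial * q.factorial : ℚ))⁻¹ • (a^p * b^q) := by
    rw [Finset.sum_mul_sum]
    refine Finset.sum_congr rfl fun p _ => Finset.sum_congr rfl fun q _ => ?_
    rw [smul_mul_smul_comm, mul_inv]
  have hL : (∑ m ∈ Finset.range (n+1), (m.factorial:ℚ)⁻¹ • (a+b)^m)
      = ∑ m ∈ Finset.range (n+1), ∑ k ∈ Finset.range (m+1),
          ((k.factorial * (m-k).factorial:ℚ))⁻¹ • (a^k * b^(m-k)) := by
    refine Finset.sum_congr rfl fun m _ => ?_
    rw [add_pow, Finset.smul_sum]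
    refine Finset.sum_congr rfl fun k hk => ?_
    rw [Finset.mem_range, Nat.lt_succ_iff] at hk
    have hc : (a^k * b^(m-k) * (m.choose k : PowerSeries A))
        = (m.choose k : ℚ) • (a^k * b^(m-k)) := by
      rw [mul_comm, ← nsmul_eq_mul, ← Nat.cast_smul_eq_nsmul ℚ]
    rw [hc, smul_smul]
    congr 1
    rw [Nat.cast_choose ℚ hk]
    have h1 : (m.factorial : ℚ) ≠ 0 := Nat.cast_ne_zero.mpr m.factorial_ne_zero
    have h2 : (k.factorial : ℚ) ≠ 0 := Nat.cast_ne_zero.mpr k.factorial_ne_zero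
    have h3 : ((m-k).factorial : ℚ) ≠ 0 := Nat.cast_ne_zero.mpr (m-k).factorial_ne_zero
    field_simp
  -- LHS
  rw [coeff_expPS_eq (a+b) hab (Nat.lt_succ_self n), hL]
  -- RHS
  rw [coeff_mul]
  have hR : ∑ p ∈ Finset.HasAntidiagonal.antidiagonal n, coeff (R := A) p.1 (expPS a) * coeff (R := A) p.2 (expPS b)
      = coeff (R := A) n ((∑ p ∈ Finset.range (n+1), (p.factorial:ℚ)⁻¹ • a^p) *
          (∑ q ∈ Finset.range (n+1), (q.factorial:ℚ)⁻¹ • b^q)) := by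
    rw [coeff_mul]
    refine Finset.sum_congr rfl fun p hp => ?_
    rw [Finset.HasAntidiagonal.mem_antidiagonal] at hp
    rw [coeff_expPS_eq a ha (by omega : p.1 < n+1),
      coeff_expPS_eq b hb (by omega : p.2 < n+1)]
  rw [hR, key]
  simp only [map_sum, coeff_smul]
  refine sum_reindex_le n (fun p q => ((p.factorial * q.factorial : ℚ))⁻¹ • coeff (R := A) n (a^p * b^q))
    fun p q hpq => ?_
  have : coeff (R := A) n (a^p * b^q) = 0 := by
    rw [coeff_mul]
    refine Finset.sum_eq_zero fun x hx => ?_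
    rw [Finset.HasAntidiagonal.mem_antidiagonal] at hx
    by_cases h1 : x.1 < p
    · rw [coeff_pow_eq_zero ha h1, zero_mul]
    · rw [coeff_pow_eq_zero hb (by omega), mul_zero]
  rw [this, smul_zero]

lemma monomial_pow' (k m : ℕ) (c : A) :
    (PowerSeries.monomial (R := A) k c)^m = PowerSeries.monomial (R := A) (k*m) (c^m) := by
  have h : ∀ j (x : A), PowerSeries.monomial (R := A) j x = PowerSeries.C (R := A) x * X^j := by
    intro j x
    ext i
    rw [coeff_monomial, coeff_C_mul, coeff_X_pow, mul_ite, mul_one, mul_zero]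
  rw [h, h, mul_pow, ← map_pow, ← pow_mul]

lemma coeff_expPS_monomial_two (c : A) (n : ℕ) :
    PowerSeries.coeff (R := A) n (expPS (PowerSeries.monomial (R := A) 2 c)) =
      if n % 2 = 0 then ((n/2).factorial : ℚ)⁻¹ • c^(n/2) else 0 := by
  rw [expPS, coeff_mk]
  simp only [monomial_pow', coeff_monomial]
  by_cases hn : n % 2 = 0
  · rw [if_pos hn, Finset.sum_eq_single (n / 2)]
    · rw [if_pos (by omega)]
    · intro m _ hm
      rw [if_neg (by omega), smul_zero]
    · intro hm
      exact absurd (Finset.mem_range.mpr (by omega)) hm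
  · rw [if_neg hn]
    refine Finset.sum_eq_zero fun m _ => ?_
    rw [if_neg (by omega), smul_zero]

end PSHelpers

section FgiHelpers
set_option linter.unusedSectionVars false
open PowerSeries
variable {R : Type*} [CommRing R] [Algebra ℚ R] {ι : Type*} [Fintype ι] [DecidableEq ι]

lemma coeff_expPS_monomial_two_C (δ : R) (n : ℕ) :
    PowerSeries.coeff (R := (MvPolynomial ι R)) n
        (expPS (PowerSeries.monomial (R := (MvPolynomial ι R)) 2 (MvPolynomial.C δ))) =
      MvPolynomial.C (PowerSeries.coeff (R := R) n (expPS (PowerSeries.monomial (R := R) 2 δ))) := by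
  rw [coeff_expPS_monomial_two, coeff_expPS_monomial_two]
  split_ifs with h
  · rw [← map_pow, map_rat_smul (MvPolynomial.C : R →+* MvPolynomial ι R)]
  · rw [map_zero]

lemma fgi_expPS_mul (Λ : Matrix ι ι R) (δ : R) (F : PowerSeries (MvPolynomial ι R)) :
    fgi Λ (expPS (PowerSeries.monomial (R := (MvPolynomial ι R)) 2 (MvPolynomial.C δ)) * F)
      = expPS (PowerSeries.monomial (R := R) 2 δ) * fgi Λ F := by
  ext n
  rw [fgi, coeff_mk, coeff_mul, coeff_mul, gaussBV_sum]
  refine Finset.sum_congr rfl fun p _ => ?_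
  rw [coeff_expPS_monomial_two_C, gaussBV_C_mul, fgi, coeff_mk]

end FgiHelpers

set_option maxHeartbeats 1000000 in
/-- Behavior of `Φ^Ξ` under a change of flattening: if
`(g, g'')` is another flattening of `Ξ`, then
`c = (gᵗB⁻¹Ag − fᵗB⁻¹Af)/8 ∈ (1/8)·ℤ` and `Φ^{Ξ̃}(ħ) = exp(cħ) Φ^Ξ(ħ)`. -/
theorem Phi_flattening_change {K : Type*} [Field K] [CharZero K] {N : ℕ}
    (Ξ : NZ K (Fin N)) (h : Ξ.IsNondeg) (g g'' : Fin N → ℤ)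
    (hflat : Ξ.A.mulVec g + Ξ.B.mulVec g'' = Ξ.ν) :
    (∃ m : ℤ,
        ({Ξ with f := g, f'' := g''} : NZ K (Fin N)).quadConst - Ξ.quadConst = (m : K) / 8) ∧
    ({Ξ with f := g, f'' := g''} : NZ K (Fin N)).Phi
      = expPS (PowerSeries.monomial (R := K) 2
            (({Ξ with f := g, f'' := g''} : NZ K (Fin N)).quadConst - Ξ.quadConst)) *
          Ξ.Phi := by
  classical
  obtain ⟨hsym, hdetB, hflatf, hz0, hz1, hLam⟩ := h
  set Ξ' : NZ K (Fin N) := {Ξ with f := g, f'' := g''} with hΞ'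
  set fK : Fin N → K := fun i => (Ξ.f i : K) with hfK
  set gK : Fin N → K := fun i => (g i : K) with hgK
  set vK : Fin N → K := fun i => ((g'' i : K) - (Ξ.f'' i : K)) with hvK
  set M : Matrix (Fin N) (Fin N) K := Ξ.BK⁻¹ * Ξ.AK with hM
  -- determinant facts
  have hBK : Ξ.BK = (Int.castRingHom K).mapMatrix Ξ.B := rfl
  have hBdet : IsUnit Ξ.BK.det := by
    rw [hBK, ← RingHom.map_det]
    simp only [Int.coe_castRingHom, isUnit_iff_ne_zero, ne_eq, Int.cast_eq_zero]
    exact hdetB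
  have hBt : IsUnit Ξ.BKᵀ.det := by rwa [Matrix.det_transpose]
  -- casting mulVec
  have hc : ∀ (P : Matrix (Fin N) (Fin N) ℤ) (u : Fin N → ℤ),
      (fun i => ((P.mulVec u i : ℤ) : K))
        = (P.map fun n => (n : K)).mulVec (fun j => (u j : K)) := by
    intro P u; funext i
    simp only [Matrix.mulVec, dotProduct, Matrix.map_apply]
    push_cast
    rfl
  -- flattening over K
  have hflK : ∀ (u u'' : Fin N → ℤ), Ξ.A.mulVec u + Ξ.B.mulVec u'' = Ξ.ν →
      Ξ.AK.mulVec (fun i => (u i : K)) + Ξ.BK.mulVec (fun i => (u'' i : K))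
        = fun i => (Ξ.ν i : K) := by
    intro u u'' huu
    funext i
    have h1 := congrArg (fun t : ℤ => (t : K)) (congrFun huu i)
    simp only [Pi.add_apply, Int.cast_add] at h1
    have e1 := congrFun (hc Ξ.A u) i
    have e2 := congrFun (hc Ξ.B u'') i
    rw [e1, e2] at h1
    exact h1
  have hg' := hflK g g'' hflat
  have hf' := hflK Ξ.f Ξ.f'' hflatf
  -- A (g - f) = B (f'' - g'')
  have hv : vK = (fun i => ((g'' i : ℤ) : K)) - (fun i => ((Ξ.f'' i : ℤ) : K)) := rfl
  have hsub : Ξ.AK.mulVec (gK - fK) = Ξ.BK.mulVec (-vK) := by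
    funext i
    have e1 := congrFun hg' i
    have e2 := congrFun hf' i
    simp only [Pi.add_apply] at e1 e2
    rw [hv, Matrix.mulVec_sub, Matrix.mulVec_neg, Matrix.mulVec_sub]
    simp only [Pi.sub_apply, Pi.neg_apply, hgK, hfK]
    linear_combination e1 - e2
  have hMu : M.mulVec (gK - fK) = -vK := by
    rw [hM, ← Matrix.mulVec_mulVec, hsub, Matrix.mulVec_mulVec,
      Matrix.nonsing_inv_mul _ hBdet, Matrix.one_mulVec]
  -- symmetry of M
  have hsymK : Ξ.AK * Ξ.BKᵀ = Ξ.BK * Ξ.AKᵀ := by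
    have h1 : (Ξ.AK * Ξ.BKᵀ)ᵀ = Ξ.AK * Ξ.BKᵀ := by
      ext i j
      have h2 := congrFun (congrFun hsym i) j
      simp only [Matrix.transpose_apply, Matrix.mul_apply] at h2
      have h3 := congrArg (fun t : ℤ => (t : K)) h2
      push_cast at h3
      simp only [Matrix.transpose_apply, Matrix.mul_apply, Matrix.map_apply, NZ.AK, NZ.BK]
      exact h3
    rw [← h1, Matrix.transpose_mul, Matrix.transpose_transpose]
  have hMsym : Mᵀ = M := by
    have key1 : Ξ.BK⁻¹ * (Ξ.AK * Ξ.BKᵀ) * (Ξ.BKᵀ)⁻¹ = Ξ.BK⁻¹ * Ξ.AK := by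
      rw [mul_assoc (Ξ.BK⁻¹), mul_assoc, Matrix.mul_nonsing_inv _ hBt, mul_one]
    have key2 : Ξ.BK⁻¹ * (Ξ.BK * Ξ.AKᵀ) * (Ξ.BKᵀ)⁻¹ = Ξ.AKᵀ * (Ξ.BKᵀ)⁻¹ := by
      rw [← mul_assoc, Matrix.nonsing_inv_mul _ hBdet, one_mul]
    rw [hM, Matrix.transpose_mul, Matrix.transpose_nonsing_inv, ← key2, ← hsymK, key1]
  -- dot product computation
  have hquad' : Ξ'.quadConst = dotProduct gK (M.mulVec gK) / 8 := rfl
  have hquad : Ξ.quadConst = dotProduct fK (M.mulVec fK) / 8 := rfl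
  have hD : dotProduct gK (M.mulVec gK) - dotProduct fK (M.mulVec fK)
      = -dotProduct (fK + gK) vK := by
    have hgf : gK = fK + (gK - fK) := by ring
    have huMf : dotProduct (gK - fK) (M.mulVec fK)
        = dotProduct fK (-vK) := by
      rw [Matrix.dotProduct_mulVec, ← Matrix.mulVec_transpose, hMsym, hMu,
        neg_dotProduct, dotProduct_neg, dotProduct_comm]
    calc dotProduct gK (M.mulVec gK) - dotProduct fK (M.mulVec fK)
        = dotProduct (fK + (gK - fK)) (M.mulVec (fK + (gK - fK)))
          - dotProduct fK (M.mulVec fK) := by rw [← hgf]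
      _ = dotProduct fK (M.mulVec (gK - fK))
          + dotProduct (gK - fK) (M.mulVec fK)
          + dotProduct (gK - fK) (M.mulVec (gK - fK)) := by
          rw [Matrix.mulVec_add, dotProduct_add, add_dotProduct,
            add_dotProduct]
          ring
      _ = dotProduct fK (-vK) + dotProduct fK (-vK)
          + dotProduct (gK - fK) (-vK) := by rw [hMu, huMf]
      _ = -dotProduct (fK + gK) vK := by
          simp only [dotProduct_neg, add_dotProduct, sub_dotProduct]
          ring
  constructor
  · refine ⟨- ∑ i, (Ξ.f i + g i) * (g'' i - Ξ.f'' i), ?_⟩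
    rw [hquad', hquad, div_sub_div_same, hD]
    congr 1
    rw [dotProduct]
    push_cast
    rw [neg_eq_iff_eq_neg, neg_neg]
    refine Finset.sum_congr rfl fun i _ => ?_
    simp only [hfK, hgK, hvK, Pi.add_apply]
  · have hδ : (MvPolynomial.C Ξ'.quadConst : MvPolynomial (Fin N) K)
        = MvPolynomial.C Ξ.quadConst
          + MvPolynomial.C (Ξ'.quadConst - Ξ.quadConst) := by
      rw [← map_add]
      congr 1
      ring
    have hcc : ∀ (k : ℕ) (x : MvPolynomial (Fin N) K), k ≠ 0 →
        PowerSeries.constantCoeff (R := MvPolynomial (Fin N) K)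
          (PowerSeries.monomial (R := (MvPolynomial (Fin N) K)) k x) = 0 := by
      intro k x hk
      rw [← PowerSeries.coeff_zero_eq_constantCoeff_apply, PowerSeries.coeff_monomial,
        if_neg (by omega)]
    have hint : Ξ'.integrand
        = expPS (PowerSeries.monomial (R := (MvPolynomial (Fin N) K)) 2
            (MvPolynomial.C (Ξ'.quadConst - Ξ.quadConst))) * Ξ.integrand := by
      rw [NZ.integrand, NZ.integrand]
      have hlin : Ξ'.linPart = Ξ.linPart := rfl
      have hz : Ξ'.z = Ξ.z := rfl
      rw [hlin, hz, hδ, map_add, ← add_assoc, expPS_add]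
      · ring
      · rw [map_add, hcc 1 _ one_ne_zero, hcc 2 _ two_ne_zero, add_zero]
      · exact hcc 2 _ two_ne_zero
    have hLamEq : Ξ'.Lam = Ξ.Lam := rfl
    rw [NZ.Phi, NZ.Phi, hLamEq, hint, fgi_expPS_mul]
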